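/- For all indices i ≠ j, the Lauricella F_C operators commute: ℓ_i^C ∘ ℓ_j^C = ℓ_j^C ∘ ℓ_i^C as ℂ-linear endomorphisms of ℂ[x_1,…,x_m]. (This is the commutator computation underlying the proof that {ℓ_1^C,…,ℓ_m^C} is a Gröbner basis for the system I_C(m).) -/
import Mathlib


open MvPolynomial

/-- The Euler operator `θ_i = x_i ∂_i` as a ℂ-linear endomorphism of `ℂ[x_1,…,x_m]`. -/
noncomputable def eulerOp {m : ℕ} (i : Fin m) :
    Module.End ℂ (MvPolynomial (Fin m) ℂ) :=
  (LinearMap.mulLeft ℂ (X i)) ∘ₗ (pderiv i).toLinearMap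

/-- Multiplication by `x_i` as a ℂ-linear endomorphism of `ℂ[x_1,…,x_m]`. -/
noncomputable def xMulOp {m : ℕ} (i : Fin m) :
    Module.End ℂ (MvPolynomial (Fin m) ℂ) :=
  LinearMap.mulLeft ℂ (X i)

/-- The Lauricella `F_C` operator
`ℓ_i^C = θ_i(θ_i + c_i − 1) − x_i(θ_1 + ⋯ + θ_m + a)(θ_1 + ⋯ + θ_m + b)`. -/
noncomputable def ellC {m : ℕ} (a b : ℂ) (c : Fin m → ℂ) (i : Fin m) :
    Module.End ℂ (MvPolynomial (Fin m) ℂ) :=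
  eulerOp i * (eulerOp i + (c i - 1) • 1) -
    xMulOp i * ((∑ j, eulerOp j) + a • 1) * ((∑ j, eulerOp j) + b • 1)

lemma X_mul_pderiv_monomial {m : ℕ} (i : Fin m) (s : Fin m →₀ ℕ) (r : ℂ) :
    X i * pderiv i (monomial s r) = (s i : ℂ) • monomial s r := by
  rw [pderiv_monomial, smul_monomial]
  rcases Nat.eq_zero_or_pos (s i) with h | h
  · simp [h]
  · have hs : s = Finsupp.single i 1 + (s - Finsupp.single i 1) := by
      ext k
      rcases eq_or_ne k i with rfl | hk
      · simp; omega
      · simp [Finsupp.single_apply, hk.symm, (by simpa [eq_comm] using hk : ¬ i = k)]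
    rw [show (monomial s) ((s i : ℂ) • r)
        = monomial (Finsupp.single i 1 + (s - Finsupp.single i 1)) ((s i : ℂ) • r) by
      rw [← hs]]
    rw [monomial_single_add, pow_one]
    rw [smul_eq_mul, mul_comm r]

lemma eulerOp_monomial {m : ℕ} (i : Fin m) (s : Fin m →₀ ℕ) (r : ℂ) :
    eulerOp i (monomial s r) = (s i : ℂ) • monomial s r :=
  X_mul_pderiv_monomial i s r

lemma sumEuler_monomial {m : ℕ} (s : Fin m →₀ ℕ) (r : ℂ) :
    (∑ k, eulerOp k) (monomial s r) = (∑ k, (s k : ℂ)) • monomial s r := by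
  simp [LinearMap.sum_apply, eulerOp_monomial, Finset.sum_smul]

lemma xMulOp_monomial {m : ℕ} (i : Fin m) (s : Fin m →₀ ℕ) (r : ℂ) :
    xMulOp i (monomial s r) = monomial (s + Finsupp.single i 1) r := by
  rw [xMulOp, LinearMap.mulLeft_apply, add_comm s, monomial_single_add, pow_one]

lemma ellC_monomial {m : ℕ} (a b : ℂ) (c : Fin m → ℂ) (i : Fin m) (s : Fin m →₀ ℕ) (r : ℂ) :
    ellC a b c i (monomial s r) =
      ((s i : ℂ) * ((s i : ℂ) + (c i - 1))) • monomial s r -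
      (((∑ k, (s k : ℂ)) + a) * ((∑ k, (s k : ℂ)) + b)) •
        monomial (s + Finsupp.single i 1) r := by
  simp only [ellC, LinearMap.sub_apply, Module.End.mul_apply, LinearMap.add_apply,
    LinearMap.smul_apply, Module.End.one_apply, eulerOp_monomial, sumEuler_monomial,
    map_add, map_smul, xMulOp_monomial, smul_smul]
  module

/-- For `i ≠ j`, the Lauricella `F_C` operators commute: `[ℓ_i^C, ℓ_j^C] = 0`. -/
theorem ellC_commute {m : ℕ} (hm : 1 ≤ m) (a b : ℂ) (c : Fin m → ℂ)
    (i j : Fin m) (hij : i ≠ j) :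
    ellC a b c i * ellC a b c j = ellC a b c j * ellC a b c i := by
  apply MvPolynomial.linearMap_ext
  intro s
  apply LinearMap.ext
  intro r
  have hji : j ≠ i := hij.symm
  have hsum : ∀ (u : Fin m), (∑ x : Fin m, ((s x : ℂ) + if u = x then 1 else 0))
      = (∑ k, (s k : ℂ)) + 1 := by
    intro u; simp [Finset.sum_add_distrib]
  simp only [LinearMap.coe_comp, Function.comp_apply, Module.End.mul_apply, ellC_monomial,
    map_sub, map_smul, Finsupp.add_apply, Finsupp.single_apply,
    hij, hji, if_neg, Nat.cast_add, Nat.cast_ite, Nat.cast_one, Nat.cast_zero]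
  simp only [if_false, add_zero, hsum]
  rw [show s + Finsupp.single j 1 + Finsupp.single i 1
      = s + Finsupp.single i 1 + Finsupp.single j 1 by rw [add_right_comm]]
  module
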